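/- arXiv:1205.4930 — 5 statements merged into one kernel-verified Lean document; each statement's English description precedes it below -/
import Mathlib

section
/- Let Δ(t) = (sinh t)^{n₁}(sinh 2t)^{n₂}, ρ = (n₁+2n₂)/2, and let φ : [0,∞) → ℝ be continuous with φ(t)·e^{(ρ−s)t} → c(s) > 0 as t → ∞, where 0 < s < ρ. Then ψ(t) = (∫₀ᵗ φ(τ)Δ(τ)dτ)/(∫₀ᵗ Δ(τ)dτ) satisfies ψ(t)·e^{(ρ−s)t} → c' for some constant c' > 0 as t → ∞. -/
/-!
Both integrands are asymptotic to exponentials: with `K = 2^{-(n₁+n₂)}`,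
`φ Δ ~ c K e^{(ρ+s)t}` and `Δ ~ K e^{2ρt}`. Integrating from `0` preserves such an asymptotic,
because the error is little-o of a positive weight whose integral diverges (the integral form of
l'Hôpital's rule). Hence `∫₀ᵗ φ Δ ~ c K e^{(ρ+s)t} / (ρ+s)` and `∫₀ᵗ Δ ~ K e^{2ρt} / (2ρ)`, and
`ψ(t) e^{(ρ-s)t} → c' = 2ρc / (ρ+s)`.
-/

open MeasureTheory Real Filter Topology Asymptotics

theorem MeasureTheory.LocallyIntegrable.intervalIntegrable {E : Type*} [NormedAddCommGroup E]
    {f : ℝ → E} {μ : Measure ℝ} (hf : LocallyIntegrable f μ) (a b : ℝ) :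
    IntervalIntegrable f μ a b :=
  (hf.integrableOn_isCompact isCompact_uIcc).intervalIntegrable

theorem Asymptotics.IsLittleO.intervalIntegral_atTop {E : Type*} [NormedAddCommGroup E]
    [NormedSpace ℝ E] {f : ℝ → E} {g : ℝ → ℝ} {a : ℝ}
    (hf : LocallyIntegrable f) (hg : LocallyIntegrable g) (hg_nonneg : ∀ᶠ t in atTop, 0 ≤ g t)
    (hg_int : Tendsto (fun t => ∫ τ in a..t, g τ) atTop atTop) (h : f =o[atTop] g) :
    (fun t => ∫ τ in a..t, f τ) =o[atTop] fun t => ∫ τ in a..t, g τ := by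
  refine isLittleO_iff.2 fun ε hε => ?_
  obtain ⟨T, hT⟩ := eventually_atTop.1 ((isLittleO_iff.1 h (half_pos hε)).and hg_nonneg)
  have htail : ∀ t ≥ T, ‖∫ τ in T..t, f τ‖ ≤ ε / 2 * ∫ τ in T..t, g τ := fun t ht => by
    rw [← intervalIntegral.integral_const_mul]
    refine intervalIntegral.norm_integral_le_of_norm_le ht (ae_of_all _ fun τ hτ => ?_)
      ((hg.intervalIntegrable T t).const_mul (ε / 2))
    obtain ⟨hfg, hg0⟩ := hT τ hτ.1.le
    rwa [Real.norm_eq_abs, abs_of_nonneg hg0] at hfg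
  -- The contribution of `[a, T]` is a constant, which the diverging `∫ g` swamps.
  filter_upwards [eventually_ge_atTop T, hg_int.eventually_ge_atTop
    (2 * (‖∫ τ in a..T, f τ‖ + ε / 2 * |∫ τ in a..T, g τ|) / ε)] with t hTt hCt
  have hG : 0 ≤ ∫ τ in a..t, g τ := hCt.trans' (by positivity)
  have hC := (div_le_iff₀' hε).1 hCt
  rw [Real.norm_eq_abs, abs_of_nonneg hG]
  rw [← intervalIntegral.integral_add_adjacent_intervals (hg.intervalIntegrable a T)
    (hg.intervalIntegrable T t)] at hC ⊢
  rw [← intervalIntegral.integral_add_adjacent_intervals (hf.intervalIntegrable a T)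
    (hf.intervalIntegrable T t)]
  linarith [htail t hTt, mul_le_mul_of_nonneg_left (neg_abs_le (∫ τ in a..T, g τ)) hε.le,
    norm_add_le (∫ τ in a..T, f τ) (∫ τ in T..t, f τ)]

theorem integral_exp_mul {b : ℝ} (hb : b ≠ 0) (a t : ℝ) :
    ∫ τ in a..t, exp (b * τ) = (exp (b * t) - exp (b * a)) / b := by
  rw [intervalIntegral.integral_comp_mul_left (fun x => exp x) hb, integral_exp, smul_eq_mul,
    inv_mul_eq_div]

theorem tendsto_integral_exp_mul_atTop {b : ℝ} (hb : 0 < b) (a : ℝ) :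
    Tendsto (fun t => ∫ τ in a..t, exp (b * τ)) atTop atTop := by
  simp_rw [integral_exp_mul hb.ne', sub_eq_add_neg]
  exact (tendsto_atTop_add_const_right _ _
    (tendsto_exp_atTop.comp (tendsto_id.const_mul_atTop hb))).atTop_div_const hb

theorem tendsto_integral_exp_mul_mul_exp_neg {b : ℝ} (hb : 0 < b) (a : ℝ) :
    Tendsto (fun t => (∫ τ in a..t, exp (b * τ)) * exp (-(b * t))) atTop (𝓝 b⁻¹) := by
  have hdecay : Tendsto (fun t => exp (-(b * t))) atTop (𝓝 0) :=
    tendsto_exp_neg_atTop_nhds_zero.comp (tendsto_id.const_mul_atTop hb)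
  have := ((hdecay.const_mul (exp (b * a))).const_sub 1).div_const b
  rw [mul_zero, sub_zero, one_div] at this
  refine this.congr fun t => ?_
  rw [integral_exp_mul hb.ne', div_mul_eq_mul_div, sub_mul, ← exp_add (b * t), add_neg_cancel,
    exp_zero, ← exp_add]

theorem tendsto_intervalIntegral_mul_exp_neg {f : ℝ → ℝ} {b L : ℝ} (hf : LocallyIntegrable f)
    (hb : 0 < b) (a : ℝ) (h : Tendsto (fun t => f t * exp (-(b * t))) atTop (𝓝 L)) :
    Tendsto (fun t => (∫ τ in a..t, f τ) * exp (-(b * t))) atTop (𝓝 (L / b)) := by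
  have hE_li : LocallyIntegrable (fun τ => exp (b * τ)) :=
    (by fun_prop : Continuous fun τ => exp (b * τ)).locallyIntegrable
  have hLE_li : LocallyIntegrable (fun τ => L * exp (b * τ)) :=
    (by fun_prop : Continuous fun τ => L * exp (b * τ)).locallyIntegrable
  have hE := tendsto_integral_exp_mul_mul_exp_neg hb a
  have hsmall : (fun τ => f τ - L * exp (b * τ)) =o[atTop] fun τ => exp (b * τ) := by
    refine (isLittleO_iff_tendsto fun _ h => absurd h (exp_ne_zero _)).2 ?_
    refine (tendsto_sub_nhds_zero_iff.2 h).congr fun τ => ?_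
    rw [sub_div, mul_div_cancel_right₀ _ (exp_ne_zero _), div_eq_mul_inv, ← exp_neg]
  have hbig : (fun t => ∫ τ in a..t, exp (b * τ)) =O[atTop] fun t => exp (b * t) :=
    isBigO_of_div_tendsto_nhds (.of_forall fun _ h => absurd h (exp_ne_zero _)) b⁻¹
      (hE.congr fun t => by rw [Pi.div_apply, div_eq_mul_inv, ← exp_neg])
  have hint : (fun t => ∫ τ in a..t, (f τ - L * exp (b * τ))) =o[atTop] fun t => exp (b * t) :=
    (hsmall.intervalIntegral_atTop (hf.sub hLE_li) hE_li (.of_forall fun τ => (exp_pos _).le)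
      (tendsto_integral_exp_mul_atTop hb a)).trans_isBigO hbig
  have := ((isLittleO_iff_tendsto fun _ h => absurd h (exp_ne_zero _)).1 hint).add (hE.const_mul L)
  rw [zero_add, ← div_eq_mul_inv] at this
  refine this.congr fun t => ?_
  rw [intervalIntegral.integral_sub (hf.intervalIntegrable a t) (hLE_li.intervalIntegrable a t),
    intervalIntegral.integral_const_mul, div_eq_mul_inv, ← exp_neg]
  ring
noncomputable def jacobiDensity (n₁ n₂ : ℕ) (t : ℝ) : ℝ := sinh t ^ n₁ * sinh (2 * t) ^ n₂

theorem continuous_jacobiDensity (n₁ n₂ : ℕ) : Continuous (jacobiDensity n₁ n₂) := by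
  unfold jacobiDensity; fun_prop

theorem tendsto_sinh_mul_exp_neg : Tendsto (fun t => sinh t * exp (-t)) atTop (𝓝 (1 / 2)) := by
  have h := ((tendsto_exp_neg_atTop_nhds_zero.comp (tendsto_id.const_mul_atTop two_pos)).const_sub
    (1 : ℝ)).div_const 2
  rw [sub_zero] at h
  refine h.congr fun t => ?_
  rw [Function.comp_apply, id, sinh_eq, div_mul_eq_mul_div, sub_mul, ← exp_add, ← exp_add,
    add_neg_cancel, exp_zero]
  ring_nf

theorem tendsto_jacobiDensity_mul_exp_neg (n₁ n₂ : ℕ) :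
    Tendsto (fun t => jacobiDensity n₁ n₂ t * exp (-((n₁ + 2 * n₂) * t))) atTop
      (𝓝 ((1 / 2) ^ (n₁ + n₂))) := by
  have h₂ := tendsto_sinh_mul_exp_neg.comp (tendsto_id.const_mul_atTop two_pos)
  rw [pow_add]
  refine ((tendsto_sinh_mul_exp_neg.pow n₁).mul (h₂.pow n₂)).congr fun t => ?_
  simp only [jacobiDensity, Function.comp_apply, id, mul_pow, ← exp_nat_mul]
  rw [mul_mul_mul_comm, ← exp_add]
  ring_nf

theorem psi_asymptotic_general (n₁ n₂ : ℕ) (s c : ℝ) (hs : 0 < s)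
    (hsρ : s < ((n₁ : ℝ) + 2 * n₂) / 2) (hc : 0 < c) (φ : ℝ → ℝ)
    (hφ : Continuous φ)
    (hlim : Tendsto (fun t : ℝ => φ t * Real.exp ((((n₁ : ℝ) + 2 * n₂) / 2 - s) * t))
      atTop (𝓝 c)) :
    ∃ c' : ℝ, 0 < c' ∧
      Tendsto (fun t : ℝ =>
          ((∫ τ in (0:ℝ)..t, φ τ * ((Real.sinh τ) ^ n₁ * (Real.sinh (2 * τ)) ^ n₂)) /
            (∫ τ in (0:ℝ)..t, (Real.sinh τ) ^ n₁ * (Real.sinh (2 * τ)) ^ n₂)) *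
          Real.exp ((((n₁ : ℝ) + 2 * n₂) / 2 - s) * t))
        atTop (𝓝 c') := by
  have hρ : 0 < (n₁ : ℝ) + 2 * n₂ := by linarith
  have hΔ := tendsto_jacobiDensity_mul_exp_neg n₁ n₂
  have hnum : Tendsto (fun t => φ t * jacobiDensity n₁ n₂ t *
      exp (-(((n₁ + 2 * n₂) / 2 + s) * t))) atTop (𝓝 (c * (1 / 2) ^ (n₁ + n₂))) :=
    (hlim.mul hΔ).congr fun t => by
      rw [mul_mul_mul_comm, ← exp_add]; ring_nf
  have hN := tendsto_intervalIntegral_mul_exp_neg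
    (hφ.mul (continuous_jacobiDensity n₁ n₂)).locallyIntegrable (by linarith) 0 hnum
  have hD := tendsto_intervalIntegral_mul_exp_neg
    (continuous_jacobiDensity n₁ n₂).locallyIntegrable hρ 0 hΔ
  refine ⟨_, div_pos (by positivity) (by positivity), (hN.div hD (by positivity)).congr fun t => ?_⟩
  simp only [Pi.div_apply, Pi.mul_apply]
  rw [mul_div_mul_comm, ← exp_sub]
  congr 1
  ring_nf

theorem psi_asymptotic (n₁ n₂ : ℕ) (hn : 0 < n₁ + n₂) (s c : ℝ) (hs : 0 < s)
    (hsρ : s < ((n₁ : ℝ) + 2 * n₂) / 2) (hc : 0 < c) (φ : ℝ → ℝ)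
    (hφ : Continuous φ)
    (hlim : Tendsto (fun t : ℝ => φ t * Real.exp ((((n₁ : ℝ) + 2 * n₂) / 2 - s) * t))
      atTop (𝓝 c)) :
    ∃ c' : ℝ, 0 < c' ∧
      Tendsto (fun t : ℝ =>
          ((∫ τ in (0:ℝ)..t, φ τ * ((Real.sinh τ) ^ n₁ * (Real.sinh (2 * τ)) ^ n₂)) /
            (∫ τ in (0:ℝ)..t, (Real.sinh τ) ^ n₁ * (Real.sinh (2 * τ)) ^ n₂)) *
          Real.exp ((((n₁ : ℝ) + 2 * n₂) / 2 - s) * t))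
        atTop (𝓝 c') :=
  psi_asymptotic_general n₁ n₂ s c hs hsρ hc φ hφ hlim
end

section
/- Let σ : G → U(H) be a unitary representation, K a compact subgroup with probability Haar measure, and β a probability measure on G that is both left and right K-invariant. If the space H^K of K-invariant vectors is spanned by a unit vector v₀, then the operator σ(β)v = ∫_G σ(g)v dβ(g) satisfies σ(β) = ψ·P, where P is the orthogonal projection onto H^K and ψ = ∫_G ⟨σ(g)v₀, v₀⟩ dβ(g). If H^K = {0}, then σ(β) = 0. -/
open MeasureTheory Real Filter Topology

/-!
Left `K`-invariance of `β` makes every `σ(β) v` a `K`-fixed vector, and right `K`-invariance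
gives `σ(β) ∘ σ(k) = σ(β)`, i.e. the adjoint `σ(β)†` also takes values in `H^K`. An operator
whose range and whose adjoint's range both lie in the line `ℂ v₀` is `⟪v₀, T v₀⟫` times the
projection onto that line, and `⟪v₀, σ(β) v₀⟫ = ∫ ⟪v₀, σ(g) v₀⟫ dβ(g)`.
-/

theorem integral_comp_eq_of_map_eq {α E : Type*} [MeasurableSpace α] [NormedAddCommGroup E]
    [NormedSpace ℝ E] {μ : Measure α} {φ : α → α} (hφ : μ.map φ = μ) {f : α → E}
    (hf : AEStronglyMeasurable f μ) : ∫ x, f (φ x) ∂μ = ∫ x, f x ∂μ := by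
  rcases eq_or_ne μ 0 with rfl | hμ
  · simp
  have hφm : AEMeasurable φ μ := by
    by_contra h
    exact hμ (by rw [← hφ, Measure.map_of_not_aemeasurable h])
  rw [← integral_map hφm (by rwa [hφ]), hφ]

section RankOne

variable {𝕜 H : Type*} [RCLike 𝕜] [NormedAddCommGroup H] [InnerProductSpace 𝕜 H]

theorem inner_smul_eq_of_mem_range_smul {v₀ x : H} (hv₀ : ‖v₀‖ = 1)
    (hx : x ∈ Set.range (fun c : 𝕜 => c • v₀)) : (inner 𝕜 v₀ x : 𝕜) • v₀ = x := by
  obtain ⟨c, rfl⟩ := hx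
  simp [inner_smul_right, inner_self_eq_norm_sq_to_K, hv₀]

theorem ContinuousLinearMap.apply_eq_of_range_adjoint_subset_line [CompleteSpace H]
    {T : H →L[𝕜] H} {v₀ : H} (hv₀ : ‖v₀‖ = 1)
    (hT : ∀ v, T v ∈ Set.range (fun c : 𝕜 => c • v₀))
    (hT' : ∀ v, T.adjoint v ∈ Set.range (fun c : 𝕜 => c • v₀)) (v : H) :
    T v = (inner 𝕜 v₀ (T v₀) : 𝕜) • (inner 𝕜 v₀ v : 𝕜) • v₀ := by
  have hcoeff : (inner 𝕜 v₀ (T v) : 𝕜) = inner 𝕜 v₀ (T v₀) * inner 𝕜 v₀ v :=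
    calc (inner 𝕜 v₀ (T v) : 𝕜) = inner 𝕜 (T.adjoint v₀) v := (adjoint_inner_left T v v₀).symm
      _ = inner 𝕜 ((inner 𝕜 v₀ (T.adjoint v₀) : 𝕜) • v₀) v := by
        rw [inner_smul_eq_of_mem_range_smul hv₀ (hT' v₀)]
      _ = inner 𝕜 v₀ (T v₀) * inner 𝕜 v₀ v := by
        rw [inner_smul_left, inner_conj_symm, adjoint_inner_left]
  calc T v = (inner 𝕜 v₀ (T v) : 𝕜) • v₀ := (inner_smul_eq_of_mem_range_smul hv₀ (hT v)).symm
    _ = _ := by rw [hcoeff, smul_smul]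

end RankOne

section IntegralOp

variable {G E : Type*} [Group G] [MeasurableSpace G] [NormedAddCommGroup E] [NormedSpace ℂ E]
  (ρ : G →* (E ≃ₗᵢ[ℂ] E)) (β : Measure G) [IsFiniteMeasure β]
  (hint : ∀ v, Integrable (fun g => ρ g v) β)

noncomputable def integralOp : E →L[ℂ] E :=
  LinearMap.mkContinuous
    { toFun := fun v => ∫ g, ρ g v ∂β
      map_add' := fun v w => by
        simp only [map_add]
        exact integral_add (hint v) (hint w)
      map_smul' := fun c v => by
        simp only [map_smul, RingHom.id_apply]
        exact integral_smul c _ }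
    (β.real Set.univ) fun v => by
      rw [mul_comm]
      exact norm_integral_le_of_norm_le_const (.of_forall fun g => ((ρ g).norm_map v).le)

def fixedPoints (K : Subgroup G) : Set E := {v | ∀ k ∈ K, ρ k v = v}

variable {ρ β} {K : Subgroup G}

theorem integralOp_apply_mem_fixedPoints [CompleteSpace E]
    (hleft : ∀ k ∈ K, β.map (fun g => k * g) = β) (v : E) :
    integralOp ρ β hint v ∈ fixedPoints ρ K := fun k hk =>
  calc ρ k (∫ g, ρ g v ∂β) = ∫ g, ρ k (ρ g v) ∂β :=
        ((ρ k).toLinearIsometry.integral_comp_comm _).symm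
    _ = ∫ g, ρ (k * g) v ∂β := by simp only [map_mul, LinearIsometryEquiv.coe_mul,
        Function.comp_apply]
    _ = ∫ g, ρ g v ∂β := integral_comp_eq_of_map_eq (hleft k hk) (hint v).1

theorem integralOp_apply_map (hright : ∀ k ∈ K, β.map (fun g => g * k) = β) {k : G}
    (hk : k ∈ K) (v : E) : integralOp ρ β hint (ρ k v) = integralOp ρ β hint v :=
  calc ∫ g, ρ g (ρ k v) ∂β = ∫ g, ρ (g * k) v ∂β := by simp only [map_mul,
        LinearIsometryEquiv.coe_mul, Function.comp_apply]
    _ = ∫ g, ρ g v ∂β := integral_comp_eq_of_map_eq (hright k hk) (hint v).1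

end IntegralOp

theorem adjoint_integralOp_apply_mem_fixedPoints {G H : Type*} [Group G] [MeasurableSpace G]
    [NormedAddCommGroup H] [InnerProductSpace ℂ H] [CompleteSpace H]
    {ρ : G →* (H ≃ₗᵢ[ℂ] H)} {β : Measure G} [IsFiniteMeasure β]
    (hint : ∀ v, Integrable (fun g => ρ g v) β) {K : Subgroup G}
    (hright : ∀ k ∈ K, β.map (fun g => g * k) = β) (u : H) :
    (integralOp ρ β hint).adjoint u ∈ fixedPoints ρ K := fun k hk => by
  set T := integralOp ρ β hint
  refine ext_inner_right ℂ fun w => ?_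
  calc (inner ℂ (ρ k (T.adjoint u)) w : ℂ)
      = inner ℂ (ρ k (T.adjoint u)) (ρ k (ρ k⁻¹ w)) := by
        rw [map_inv, LinearIsometryEquiv.coe_inv, LinearIsometryEquiv.apply_symm_apply]
    _ = inner ℂ u (T (ρ k⁻¹ w)) := by
        rw [LinearIsometryEquiv.inner_map_map, ContinuousLinearMap.adjoint_inner_left]
    _ = inner ℂ (T.adjoint u) w := by
        rw [integralOp_apply_map hint hright (inv_mem hk), ContinuousLinearMap.adjoint_inner_left]

theorem biinvariant_average_formula {H : Type*} [NormedAddCommGroup H]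
    [InnerProductSpace ℂ H] [CompleteSpace H]
    {G : Type*} [Group G] [MeasurableSpace G]
    (σ : G → (H ≃ₗᵢ[ℂ] H)) (hσ : ∀ g g' v, σ (g * g') v = σ g (σ g' v))
    (K : Subgroup G) (β : Measure G) [IsProbabilityMeasure β]
    (hleft : ∀ k ∈ K, Measure.map (fun g => k * g) β = β)
    (hright : ∀ k ∈ K, Measure.map (fun g => g * k) β = β)
    (hint : ∀ v : H, Integrable (fun g => σ g v) β) :
    (∀ v₀ : H, ‖v₀‖ = 1 →
        {v : H | ∀ k ∈ K, σ k v = v} = Set.range (fun c : ℂ => c • v₀) →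
        ∀ v : H, (∫ g, σ g v ∂β) =
          (∫ g, (inner ℂ v₀ (σ g v₀) : ℂ) ∂β) • ((inner ℂ v₀ v : ℂ) • v₀)) ∧
    ({v : H | ∀ k ∈ K, σ k v = v} = {0} →
        ∀ v : H, (∫ g, σ g v ∂β) = 0) := by
  let ρ : G →* (H ≃ₗᵢ[ℂ] H) := MonoidHom.mk' σ fun g g' => LinearIsometryEquiv.ext (hσ g g')
  let T := integralOp ρ β hint
  have hfix (v : H) : T v ∈ {v : H | ∀ k ∈ K, σ k v = v} :=
    integralOp_apply_mem_fixedPoints (ρ := ρ) hint hleft v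
  refine ⟨fun v₀ hv₀ hline v => ?_, fun hzero v => Set.mem_singleton_iff.mp (hzero ▸ hfix v)⟩
  rw [integral_inner (hint v₀) v₀]
  exact T.apply_eq_of_range_adjoint_subset_line hv₀ (fun w => hline ▸ hfix w)
    (fun w => hline ▸ adjoint_integralOp_apply_mem_fixedPoints (ρ := ρ) hint hright w) v
end

section
/- For δ > 0, partition each interval [m, m+1], m ∈ ℕ, into ⌊e^{δm/2}+1⌋ subintervals of equal length, and let (t_n) be the increasing sequence of all endpoints. Then consecutive gaps satisfy t_{n+1} − t_n ≤ e^{-δ(t_n − 1)/2}, and Σ_n t_n² e^{-δ t_n} < ∞. -/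
/-!
Enumerate the grid points block by block: `gridIndex N n = (m, k)` stands for the point
`m + k / N m`, and each step either moves to the next point of the block `[m, m + 1)` or to
the start `(m + 1, 0)` of the next block. The gap after a point of block `m` is `1 / N m`, and
with `N m = ⌊e^{δm/2} + 1⌋₊ > e^{δm/2}` this is at most `e^{-δ(t - 1)/2}` because `t < m + 1`.
For the series, every term from block `m` is at most `4 m² e^{-δm}` and block `m` has
`N m ≤ 2 e^{δm/2}` terms, so the series is dominated by `∑ 8 m² e^{-δm/2} < ∞`.
-/

open Real

section Grid

variable (N : ℕ → ℕ)

def gridNext (p : ℕ × ℕ) : ℕ × ℕ :=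
  if p.2 + 1 < N p.1 then (p.1, p.2 + 1) else (p.1 + 1, 0)

def gridIndex : ℕ → ℕ × ℕ
  | 0 => (1, 0)
  | n + 1 => gridNext N (gridIndex n)

noncomputable def gridPoint (n : ℕ) : ℝ :=
  (gridIndex N n).1 + (gridIndex N n).2 / N (gridIndex N n).1

variable {N}

lemma one_le_gridIndex_fst (n : ℕ) : 1 ≤ (gridIndex N n).1 := by
  induction n with
  | zero => rfl
  | succ n ih =>
    simp only [gridIndex, gridNext]
    split_ifs <;> dsimp only <;> omega

lemma gridIndex_fst_le_gridPoint (n : ℕ) : ((gridIndex N n).1 : ℝ) ≤ gridPoint N n :=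
  le_add_of_nonneg_right (by positivity)

lemma exists_gridIndex_eq_of_exists_zero {m : ℕ} (h₀ : ∃ n, gridIndex N n = (m, 0)) :
    ∀ k < N m, ∃ n, gridIndex N n = (m, k) := by
  intro k
  induction k with
  | zero => exact fun _ => h₀
  | succ k ih =>
    intro hk
    obtain ⟨n, hn⟩ := ih (by omega)
    exact ⟨n + 1, by simp only [gridIndex, gridNext, hn, if_pos hk]⟩

variable (hN : ∀ m, 0 < N m)
include hN

lemma gridIndex_snd_lt (n : ℕ) : (gridIndex N n).2 < N (gridIndex N n).1 := by
  induction n with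
  | zero => exact hN 1
  | succ n ih =>
    simp only [gridIndex, gridNext]
    split_ifs with h
    · exact h
    · exact hN _

lemma gridPoint_succ (n : ℕ) :
    gridPoint N (n + 1) = gridPoint N n + 1 / N (gridIndex N n).1 := by
  have hk := gridIndex_snd_lt hN n
  simp only [gridPoint, gridIndex]
  generalize gridIndex N n = p at hk ⊢
  obtain ⟨m, k⟩ := p
  have hNm : (N m : ℝ) ≠ 0 := by exact_mod_cast (hN m).ne'
  simp only [gridNext]
  split_ifs with h
  · push_cast
    ring
  · have hk' : (k : ℝ) + 1 = N m := by exact_mod_cast le_antisymm hk (not_lt.1 h)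
    push_cast
    rw [zero_div, add_zero, add_assoc, ← add_div, hk', div_self hNm]

lemma gridPoint_strictMono : StrictMono (gridPoint N) :=
  strictMono_nat_of_lt_succ fun n => by
    rw [gridPoint_succ hN]
    have hpos := hN (gridIndex N n).1
    exact lt_add_of_pos_right _ (by positivity)

lemma gridPoint_lt_gridIndex_fst_add_one (n : ℕ) : gridPoint N n < (gridIndex N n).1 + 1 := by
  have hk : ((gridIndex N n).2 : ℝ) < N (gridIndex N n).1 := by
    exact_mod_cast gridIndex_snd_lt hN n
  have hpos : (0 : ℝ) < N (gridIndex N n).1 := by exact_mod_cast hN _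
  exact add_lt_add_right ((div_lt_one hpos).2 hk) _

lemma gridIndex_injective : Function.Injective (gridIndex N) :=
  Function.Injective.of_comp (f := fun p : ℕ × ℕ => (p.1 : ℝ) + p.2 / N p.1)
    (gridPoint_strictMono hN).injective

lemma exists_gridIndex_eq_zero {m : ℕ} (hm : 1 ≤ m) : ∃ n, gridIndex N n = (m, 0) := by
  induction m, hm using Nat.le_induction with
  | base => exact ⟨0, rfl⟩
  | succ m _ ih =>
    obtain ⟨n, hn⟩ := exists_gridIndex_eq_of_exists_zero ih (N m - 1) (Nat.sub_one_lt (hN m).ne')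
    refine ⟨n + 1, ?_⟩
    simp only [gridIndex, gridNext, hn, Nat.sub_add_cancel (hN m), lt_irrefl, if_false]

lemma exists_gridIndex_eq {m k : ℕ} (hm : 1 ≤ m) (hk : k < N m) :
    ∃ n, gridIndex N n = (m, k) :=
  exists_gridIndex_eq_of_exists_zero (exists_gridIndex_eq_zero hN hm) k hk

lemma range_gridPoint :
    Set.range (gridPoint N) =
      {x : ℝ | ∃ m : ℕ, 1 ≤ m ∧ ∃ k : ℕ, k ≤ N m ∧ x = (m : ℝ) + (k : ℝ) / (N m : ℝ)} := by
  ext x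
  constructor
  · rintro ⟨n, rfl⟩
    exact ⟨_, one_le_gridIndex_fst n, _, (gridIndex_snd_lt hN n).le, rfl⟩
  · rintro ⟨m, hm, k, hk, rfl⟩
    rcases hk.lt_or_eq with hk | rfl
    · obtain ⟨n, hn⟩ := exists_gridIndex_eq hN hm hk
      exact ⟨n, by simp only [gridPoint, hn]⟩
    -- the right endpoint `m + N m / N m` of a block is the left endpoint of the next one
    · obtain ⟨n, hn⟩ := exists_gridIndex_eq_zero hN (hm.trans m.le_succ)
      have hNm : (N m : ℝ) ≠ 0 := by exact_mod_cast (hN m).ne'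
      exact ⟨n, by simp only [gridPoint, hn, div_self hNm]; push_cast; ring⟩

lemma summable_comp_gridIndex_fst {g : ℕ → ℝ} (hg : 0 ≤ g)
    (hsum : Summable fun m => N m * g m) :
    Summable fun n => g (gridIndex N n).1 := by
  have hblocks : Summable fun p : (Σ m, Fin (N m)) => g p.1 := by
    rw [summable_sigma_of_nonneg fun p => hg p.1]
    refine ⟨fun m => Summable.of_finite, ?_⟩
    simpa only [tsum_fintype, Finset.sum_const, Finset.card_univ, Fintype.card_fin,
      nsmul_eq_mul] using hsum
  let e : ℕ → Σ m, Fin (N m) := fun n => ⟨_, ⟨_, gridIndex_snd_lt hN n⟩⟩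
  have he : Function.Injective e := fun a b hab =>
    gridIndex_injective hN (Prod.ext (congrArg Sigma.fst hab)
      (by simpa only [e, Fin.val_eq_val] using congrArg (fun p => (p.2 : ℕ)) hab))
  exact hblocks.comp_injective he

end Grid

noncomputable def samplingCount (δ : ℝ) (m : ℕ) : ℕ := ⌊exp (δ * m / 2) + 1⌋₊

lemma lt_samplingCount (δ : ℝ) (m : ℕ) : exp (δ * m / 2) < samplingCount δ m := by
  rw [samplingCount, Nat.floor_add_one (exp_nonneg _)]
  push_cast
  exact Nat.lt_floor_add_one _

lemma samplingCount_pos (δ : ℝ) (m : ℕ) : 0 < samplingCount δ m := by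
  exact_mod_cast (exp_pos _).trans (lt_samplingCount δ m)

lemma samplingCount_le {δ : ℝ} (hδ : 0 ≤ δ) (m : ℕ) :
    (samplingCount δ m : ℝ) ≤ 2 * exp (δ * m / 2) := by
  have h₁ : (samplingCount δ m : ℝ) ≤ exp (δ * m / 2) + 1 := Nat.floor_le (by positivity)
  have h₂ : 1 ≤ exp (δ * m / 2) := one_le_exp (by positivity)
  linarith

lemma gridPoint_samplingCount_gap {δ : ℝ} (hδ : 0 ≤ δ) (n : ℕ) :
    gridPoint (samplingCount δ) (n + 1) - gridPoint (samplingCount δ) n ≤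
      exp (-δ * (gridPoint (samplingCount δ) n - 1) / 2) := by
  set m := (gridIndex (samplingCount δ) n).1
  have ht := gridPoint_lt_gridIndex_fst_add_one (samplingCount_pos δ) n
  rw [gridPoint_succ (samplingCount_pos δ), add_sub_cancel_left, one_div,
    neg_mul, neg_div, exp_neg]
  apply inv_anti₀ (exp_pos _)
  calc exp (δ * (gridPoint (samplingCount δ) n - 1) / 2)
      ≤ exp (δ * m / 2) := exp_le_exp.2 (by gcongr; linarith)
    _ ≤ samplingCount δ m := (lt_samplingCount δ m).le

lemma summable_samplingCount_mul {δ : ℝ} (hδ : 0 < δ) :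
    Summable fun m : ℕ => samplingCount δ m * (4 * m ^ 2 * exp (-δ * m)) := by
  refine .of_nonneg_of_le (fun m => by positivity) (fun m => ?_)
    ((summable_pow_mul_exp_neg_nat_mul 2 (half_pos hδ)).mul_left 8)
  have hexp : exp (δ * m / 2) * exp (-δ * m) = exp (-(δ / 2) * m) := by
    rw [← exp_add]; ring_nf
  calc (samplingCount δ m : ℝ) * (4 * m ^ 2 * exp (-δ * m))
      ≤ 2 * exp (δ * m / 2) * (4 * m ^ 2 * exp (-δ * m)) := by
        gcongr; exact samplingCount_le hδ.le m
    _ = 8 * (m ^ 2 * exp (-(δ / 2) * m)) := by rw [← hexp]; ring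

lemma summable_gridPoint_samplingCount {δ : ℝ} (hδ : 0 < δ) :
    Summable fun n =>
      gridPoint (samplingCount δ) n ^ 2 * exp (-δ * gridPoint (samplingCount δ) n) := by
  refine .of_nonneg_of_le (fun n => by positivity) (fun n => ?_)
    (summable_comp_gridIndex_fst (samplingCount_pos δ) (fun m => by positivity)
      (summable_samplingCount_mul hδ))
  have hm : (1 : ℝ) ≤ (gridIndex (samplingCount δ) n).1 := by
    exact_mod_cast one_le_gridIndex_fst n
  have hlo := gridIndex_fst_le_gridPoint (N := samplingCount δ) n
  have hhi := gridPoint_lt_gridIndex_fst_add_one (samplingCount_pos δ) n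
  set m := (gridIndex (samplingCount δ) n).1
  set t := gridPoint (samplingCount δ) n
  calc t ^ 2 * exp (-δ * t)
      ≤ (2 * m) ^ 2 * exp (-δ * m) := by
        apply mul_le_mul _ (exp_le_exp.2 (by nlinarith)) (by positivity) (by positivity)
        exact pow_le_pow_left₀ (by linarith) (by linarith) 2
    _ = 4 * m ^ 2 * exp (-δ * m) := by ring

theorem sampling_times_construction (δ : ℝ) (hδ : 0 < δ) :
    ∃ t : ℕ → ℝ, StrictMono t ∧
      Set.range t = {x : ℝ | ∃ m : ℕ, 1 ≤ m ∧ ∃ k : ℕ,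
        k ≤ ⌊Real.exp (δ * m / 2) + 1⌋₊ ∧
        x = (m : ℝ) + (k : ℝ) / (⌊Real.exp (δ * m / 2) + 1⌋₊ : ℝ)} ∧
      (∀ n, t (n + 1) - t n ≤ Real.exp (-δ * (t n - 1) / 2)) ∧
      Summable (fun n => (t n) ^ 2 * Real.exp (-δ * t n)) :=
  ⟨gridPoint (samplingCount δ), gridPoint_strictMono (samplingCount_pos δ),
    range_gridPoint (samplingCount_pos δ), gridPoint_samplingCount_gap hδ.le,
    summable_gridPoint_samplingCount hδ⟩
end

section
/- In the setting of Theorem 1.4 (mean ergodic theorem with purity), if P₁f ≠ 0 then ‖A_t f − P₀ f‖₂ · e^{(ρ−s₁)t} converges to c₁‖P₁f‖₂ > 0 as t → ∞; in particular ‖A_t f − P₀f‖₂ ≍ e^{-(ρ-s₁)t}. In abstract form: if ψ_j : [1,∞) → ℝ satisfy ψ_j(t)e^{(ρ−s_j)t} → c_j > 0 for ρ > s₁ > ⋯ > s_k > r, P_j are pairwise orthogonal projections on a Hilbert space, and ‖A_t f − Σ_{j=0}^k ψ_j(t)P_j f‖ ≤ D t e^{-(ρ−r)t} with ψ₀ =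 1, then for f with P₁f ≠ 0, e^{(ρ−s₁)t}‖A_t f − P₀f‖ → c₁‖P₁f‖. -/
open Real Filter Topology

/-!
After multiplying by `e^{(ρ-s₁)t}`, the error term of the expansion is `O(t e^{-(s₁-r)t}) → 0`,
the weight of `P₁f` tends to `c₁`, and the weight of every `P_jf` with `j ≥ 2` is
`ψ_j(t)e^{(ρ-s_j)t} · e^{-(s₁-s_j)t} → c_j · 0`. Hence `e^{(ρ-s₁)t}(A_tf - P₀f) → c₁P₁f`
as vectors, and the norm follows by continuity.
-/

lemma tendsto_mul_exp_of_tendsto_mul_exp_of_lt {φ : ℝ → ℝ} {a b c : ℝ}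
    (hφ : Tendsto (fun t => φ t * exp (a * t)) atTop (𝓝 c)) (hba : b < a) :
    Tendsto (fun t => φ t * exp (b * t)) atTop (𝓝 0) := by
  have hdecay : Tendsto (fun t => exp ((b - a) * t)) atTop (𝓝 0) :=
    tendsto_exp_comp_nhds_zero.2
      ((tendsto_const_mul_atBot_of_neg (sub_neg.2 hba)).2 tendsto_id)
  refine (mul_zero c ▸ hφ.mul hdecay).congr fun t => ?_
  rw [mul_assoc, ← exp_add]
  ring_nf

lemma tendsto_exp_smul_of_norm_le {E : Type*} [NormedAddCommGroup E] [NormedSpace ℝ E]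
    {e : ℝ → E} {a b D : ℝ} (hab : a < b)
    (he : ∀ᶠ t in atTop, ‖e t‖ ≤ D * t * exp (-b * t)) :
    Tendsto (fun t => exp (a * t) • e t) atTop (𝓝 0) := by
  have hbound : Tendsto (fun t : ℝ => D * (t ^ (1 : ℝ) * exp (-(b - a) * t))) atTop (𝓝 0) :=
    mul_zero D ▸ (tendsto_rpow_mul_exp_neg_mul_atTop_nhds_zero 1 _ (sub_pos.2 hab)).const_mul D
  refine squeeze_zero_norm' ?_ hbound
  filter_upwards [he] with t ht
  calc ‖exp (a * t) • e t‖ = exp (a * t) * ‖e t‖ := by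
        rw [norm_smul, norm_of_nonneg (exp_pos _).le]
    _ ≤ exp (a * t) * (D * t * exp (-b * t)) := by gcongr
    _ = D * (t ^ (1 : ℝ) * exp (-(b - a) * t)) := by
        rw [rpow_one, show -(b - a) * t = a * t + -b * t by ring, exp_add]
        ring

lemma tendsto_sum_smul_of_tendsto_of_tendsto_zero {α ι E : Type*} [DecidableEq ι]
    [NormedAddCommGroup E] [NormedSpace ℝ E] {l : Filter α} {S : Finset ι} {i₀ : ι}
    (hi₀ : i₀ ∈ S) {w : ι → α → ℝ} {v : ι → E} {c : ℝ} (hlead : Tendsto (w i₀) l (𝓝 c))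
    (hrest : ∀ i ∈ S, i ≠ i₀ → Tendsto (w i) l (𝓝 0)) :
    Tendsto (fun t => ∑ i ∈ S, w i t • v i) l (𝓝 (c • v i₀)) := by
  have hterm : ∀ i ∈ S,
      Tendsto (fun t => w i t • v i) l (𝓝 (if i = i₀ then c • v i₀ else 0)) := by
    intro i hi
    split_ifs with h
    · subst h
      exact hlead.smul_const _
    · simpa using (hrest i hi h).smul_const (v i)
  simpa [Finset.sum_ite_eq', hi₀] using tendsto_finsetSum S hterm

theorem deviation_norm_asymptotic_general {H : Type*} [NormedAddCommGroup H] [InnerProductSpace ℂ H]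
    (k : ℕ) (hk : 1 ≤ k) (ρ r D : ℝ)
    (s : Fin (k + 1) → ℝ) (hanti : StrictAnti s) (hsr : r < s (Fin.last k))
    (c : Fin (k + 1) → ℝ) (hc : ∀ j, 0 < c j)
    (ψ : Fin (k + 1) → ℝ → ℝ) (hψ0 : ∀ t, ψ 0 t = 1)
    (hψ : ∀ j : Fin (k + 1), j ≠ 0 →
      Tendsto (fun t => ψ j t * Real.exp ((ρ - s j) * t)) atTop (𝓝 (c j)))
    (P : Fin (k + 1) → H →L[ℂ] H)
    (A : ℝ → H → H) (f : H)
    (hmean : ∀ t : ℝ, 1 ≤ t →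
      ‖A t f - ∑ j, ψ j t • P j f‖ ≤ D * t * Real.exp (-(ρ - r) * t)) :
    Tendsto (fun t => Real.exp ((ρ - s 1) * t) * ‖A t f - P 0 f‖)
      atTop (𝓝 (c 1 * ‖P 1 f‖)) := by
  obtain ⟨m, rfl⟩ : ∃ m, k = m + 1 := ⟨k - 1, by omega⟩
  have hs1r : r < s 1 := hsr.trans_le (hanti.antitone (Fin.le_last 1))
  have hsplit : ∀ t, exp ((ρ - s 1) * t) • (A t f - P 0 f) =
      exp ((ρ - s 1) * t) • (A t f - ∑ j, ψ j t • P j f) +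
        ∑ j ∈ Finset.univ.erase 0, (exp ((ρ - s 1) * t) * ψ j t) • P j f := by
    intro t
    simp only [← smul_smul, ← Finset.smul_sum, ← smul_add]
    rw [← Finset.add_sum_erase _ _ (Finset.mem_univ 0), hψ0, one_smul]
    congr 1
    abel
  have herr := tendsto_exp_smul_of_norm_le (e := fun t => A t f - ∑ j, ψ j t • P j f)
    (by linarith : ρ - s 1 < ρ - r) (eventually_atTop.2 ⟨1, hmean⟩)
  have hlead := tendsto_sum_smul_of_tendsto_of_tendsto_zero (v := fun j => P j f)
    (Finset.mem_erase.2 ⟨Fin.zero_lt_one.ne', Finset.mem_univ 1⟩)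
    (w := fun j t => exp ((ρ - s 1) * t) * ψ j t)
    ((hψ 1 Fin.zero_lt_one.ne').congr fun t => mul_comm _ _) fun j hj hj1 => by
      have hj0 := Finset.ne_of_mem_erase hj
      have h1j : 1 < j := by
        simp only [Ne, Fin.ext_iff, Fin.lt_def, Fin.val_zero, Fin.val_one] at hj0 hj1 ⊢
        omega
      simpa only [mul_comm (exp _)] using
        tendsto_mul_exp_of_tendsto_mul_exp_of_lt (hψ j hj0) (by linarith [hanti h1j])
  have hvec := (zero_add (c 1 • P 1 f) ▸ herr.add hlead).congr fun t => (hsplit t).symm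
  simpa [norm_smul, norm_of_nonneg (exp_pos _).le, abs_of_pos (hc 1)] using hvec.norm

theorem deviation_norm_asymptotic {H : Type*} [NormedAddCommGroup H] [InnerProductSpace ℂ H]
    (k : ℕ) (hk : 1 ≤ k) (ρ r D : ℝ) (hr : 0 < r) (hD : 0 < D)
    (s : Fin (k + 1) → ℝ) (hs0 : s 0 = ρ) (hanti : StrictAnti s) (hsr : r < s (Fin.last k))
    (c : Fin (k + 1) → ℝ) (hc : ∀ j, 0 < c j)
    (ψ : Fin (k + 1) → ℝ → ℝ) (hψ0 : ∀ t, ψ 0 t = 1)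
    (hψ : ∀ j : Fin (k + 1), j ≠ 0 →
      Tendsto (fun t => ψ j t * Real.exp ((ρ - s j) * t)) atTop (𝓝 (c j)))
    (P : Fin (k + 1) → H →L[ℂ] H) (horth : ∀ i j, i ≠ j → (P i).comp (P j) = 0)
    (A : ℝ → H → H) (f : H)
    (hmean : ∀ t : ℝ, 1 ≤ t →
      ‖A t f - ∑ j, ψ j t • P j f‖ ≤ D * t * Real.exp (-(ρ - r) * t))
    (h1 : P 1 f ≠ 0) :
    Tendsto (fun t => Real.exp ((ρ - s 1) * t) * ‖A t f - P 0 f‖)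
      atTop (𝓝 (c 1 * ‖P 1 f‖)) :=
  deviation_norm_asymptotic_general k hk ρ r D s hanti hsr c hc ψ hψ0 hψ P A f hmean
end

section
/- In the abstract setting of the previous statement, if additionally for a.e. x one has |A_n f(x) − Σ_{j=0}^k ψ_j(n)(P_jf)(x)| ≤ C(x)·n^{3/2+ε}e^{-(ρ−r)n} with C finite a.e., and P₁f ≠ 0, then (A_n f − P₀f)/‖A_n f − P₀f‖₂ converges almost everywhere to (P₁f)/‖P₁f‖₂ as n → ∞ through the integers. -/
open MeasureTheory Real Filter Topology

/-!
Divided by `ψ₁(n) ~ c₁ e^{-(ρ - s₁) n}`, every term of the expansion of `A_n f - P₀ f` other than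
`ψ₁(n) P₁ f` becomes negligible: `ψ_j / ψ₁ → 0` for `j ≥ 2`, and both error bounds, a power of `n`
times `e^{-(ρ - r) n}`, are `o(e^{-(ρ - s₁) n})` because `r < s₁`. Hence `ψ₁(n)⁻¹ (A_n f - P₀ f)`
tends to `P₁ f` in `L²` and pointwise almost everywhere; in particular
`ψ₁(n)⁻¹ ‖A_n f - P₀ f‖₂ → ‖P₁ f‖₂ ≠ 0`, and the quotient of the two limits is the claim.
-/

section RealAsymptotics

variable {α : Type*} {l : Filter α}

theorem eventually_pos_of_tendsto_mul {g w : α → ℝ} {c : ℝ} (hw : ∀ n, 0 < w n)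
    (h : Tendsto (fun n => g n * w n) l (𝓝 c)) (hc : 0 < c) : ∀ᶠ n in l, 0 < g n :=
  (h.eventually (eventually_gt_nhds hc)).mono fun n hn => (pos_iff_pos_of_mul_pos hn).2 (hw n)

theorem tendsto_div_of_tendsto_mul {f g w : α → ℝ} {c : ℝ} (hw : ∀ n, w n ≠ 0)
    (hf : Tendsto (fun n => f n * w n) l (𝓝 0)) (hg : Tendsto (fun n => g n * w n) l (𝓝 c))
    (hc : c ≠ 0) : Tendsto (fun n => f n / g n) l (𝓝 0) := by
  have h := hf.div hg hc
  rw [zero_div] at h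
  exact h.congr fun n => mul_div_mul_right _ _ (hw n)

end RealAsymptotics

theorem tendsto_mul_exp_of_lt {f : ℕ → ℝ} {a σ τ : ℝ}
    (h : Tendsto (fun n : ℕ => f n * exp (σ * n)) atTop (𝓝 a)) (hτ : τ < σ) :
    Tendsto (fun n : ℕ => f n * exp (τ * n)) atTop (𝓝 0) := by
  have hexp : Tendsto (fun n : ℕ => exp ((τ - σ) * n)) atTop (𝓝 0) :=
    tendsto_exp_atBot.comp
      ((tendsto_natCast_atTop_atTop (R := ℝ)).const_mul_atTop_of_neg (sub_neg.2 hτ))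
  simpa [mul_assoc, ← exp_add, ← add_mul] using h.mul hexp

theorem tendsto_rpow_mul_exp_neg_mul_mul_exp (K a : ℝ) {b σ : ℝ} (h : σ < b) :
    Tendsto (fun n : ℕ => K * (n : ℝ) ^ a * exp (-b * n) * exp (σ * n)) atTop (𝓝 0) := by
  have h₀ := ((tendsto_rpow_mul_exp_neg_mul_atTop_nhds_zero a (b - σ) (sub_pos.2 h)).comp
    tendsto_natCast_atTop_atTop).const_mul K
  rw [mul_zero] at h₀
  refine h₀.congr fun n => ?_
  simp only [Function.comp_apply, mul_assoc, ← exp_add]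
  ring_nf

section Expansion

variable {α ι : Type*} {l : Filter α} {ψ : ι → α → ℝ} {i₀ i₁ : ι}

theorem tendsto_div_ite_of_dominant [DecidableEq ι] (hψ₁ : ∀ᶠ n in l, 0 < ψ i₁ n)
    (hdom : ∀ j, j ≠ i₀ → j ≠ i₁ → Tendsto (fun n => ψ j n / ψ i₁ n) l (𝓝 0))
    (j : ι) (hj : j ≠ i₀) :
    Tendsto (fun n => ψ j n / ψ i₁ n) l (𝓝 (if j = i₁ then 1 else 0)) := by
  split_ifs with hj₁
  · subst hj₁
    exact tendsto_const_nhds.congr' (hψ₁.mono fun n hn => (div_self hn.ne').symm)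
  · exact hdom j hj hj₁

variable [Fintype ι] {E : Type*} [NormedAddCommGroup E] [NormedSpace ℝ E]

theorem tendsto_inv_smul_sub_of_expansion {w : ι → E} {u : α → E} {δ : α → ℝ}
    (h₁₀ : i₁ ≠ i₀) (hψ₀ : ∀ n, ψ i₀ n = 1) (hψ₁ : ∀ᶠ n in l, 0 < ψ i₁ n)
    (hdom : ∀ j, j ≠ i₀ → j ≠ i₁ → Tendsto (fun n => ψ j n / ψ i₁ n) l (𝓝 0))
    (hu : ∀ᶠ n in l, ‖u n - ∑ j, ψ j n • w j‖ ≤ δ n)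
    (hδ : Tendsto (fun n => δ n / ψ i₁ n) l (𝓝 0)) :
    Tendsto (fun n => (ψ i₁ n)⁻¹ • (u n - w i₀)) l (𝓝 (w i₁)) := by
  classical
  have hsplit : ∀ n, (ψ i₁ n)⁻¹ • (u n - w i₀) = (ψ i₁ n)⁻¹ • (u n - ∑ j, ψ j n • w j)
      + ∑ j ∈ Finset.univ.erase i₀, (ψ j n / ψ i₁ n) • w j := by
    intro n
    rw [← Finset.add_sum_erase _ _ (Finset.mem_univ i₀), hψ₀, one_smul]
    simp only [div_eq_inv_mul, mul_smul, ← Finset.smul_sum, ← smul_add]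
    abel_nf
  have hrem : Tendsto (fun n => (ψ i₁ n)⁻¹ • (u n - ∑ j, ψ j n • w j)) l (𝓝 0) := by
    refine squeeze_zero_norm' ?_ hδ
    filter_upwards [hψ₁, hu] with n hn hun
    rw [norm_smul, norm_inv, norm_of_nonneg hn.le, inv_mul_eq_div]
    exact div_le_div_of_nonneg_right hun hn.le
  have hmain : Tendsto (fun n => ∑ j ∈ Finset.univ.erase i₀, (ψ j n / ψ i₁ n) • w j) l
      (𝓝 (∑ j ∈ Finset.univ.erase i₀, (if j = i₁ then 1 else 0 : ℝ) • w j)) :=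
    tendsto_finsetSum _ fun j hj =>
      (tendsto_div_ite_of_dominant hψ₁ hdom j (Finset.ne_of_mem_erase hj)).smul_const (w j)
  simp only [ite_smul, one_smul, zero_smul, Finset.sum_ite_eq', Finset.mem_erase,
    Finset.mem_univ, h₁₀, ne_eq, not_false_eq_true, and_true, if_true] at hmain
  simpa only [hsplit, zero_add] using hrem.add hmain

variable {X : Type*} [MeasurableSpace X] {μ : Measure X} {p : ENNReal}

theorem MeasureTheory.MemLp.norm_toLp_sub_sum_smul {a : X → E} {f : ι → X → E}
    (ha : MemLp a p μ) (hf : ∀ j, MemLp (f j) p μ) (c : ι → ℝ) :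
    ‖ha.toLp a - ∑ j, c j • (hf j).toLp (f j)‖ =
      (eLpNorm (fun x => a x - ∑ j, c j • f j x) p μ).toReal := by
  rw [Lp.norm_def]
  congr 1
  refine eLpNorm_congr_ae ?_
  have hsmul : ∀ᵐ x ∂μ, ∀ j, (c j • (hf j).toLp (f j) : Lp E p μ) x = c j • f j x := by
    refine ae_all_iff.2 fun j => ?_
    filter_upwards [Lp.coeFn_smul (c j) ((hf j).toLp (f j)), (hf j).coeFn_toLp] with x h h'
    rw [h, Pi.smul_apply, h']
  filter_upwards [Lp.coeFn_sub (ha.toLp a) (∑ j, c j • (hf j).toLp (f j)), ha.coeFn_toLp,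
    Lp.coeFn_fun_finsetSum Finset.univ (fun j => c j • (hf j).toLp (f j)), hsmul]
    with x hsub ha' hsum hsmul'
  simp only [hsub, Pi.sub_apply, ha', hsum, hsmul']

theorem tendsto_inv_mul_eLpNorm_sub_of_expansion [Fact (1 ≤ p)] {f : ι → X → E}
    {a : α → X → E} {δ : α → ℝ} (hf : ∀ j, MemLp (f j) p μ) (ha : ∀ n, MemLp (a n) p μ)
    (h₁₀ : i₁ ≠ i₀) (hψ₀ : ∀ n, ψ i₀ n = 1) (hψ₁ : ∀ᶠ n in l, 0 < ψ i₁ n)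
    (hdom : ∀ j, j ≠ i₀ → j ≠ i₁ → Tendsto (fun n => ψ j n / ψ i₁ n) l (𝓝 0))
    (hexp : ∀ᶠ n in l, (eLpNorm (fun x => a n x - ∑ j, ψ j n • f j x) p μ).toReal ≤ δ n)
    (hδ : Tendsto (fun n => δ n / ψ i₁ n) l (𝓝 0)) :
    Tendsto (fun n => (ψ i₁ n)⁻¹ * (eLpNorm (fun x => a n x - f i₀ x) p μ).toReal) l
      (𝓝 (eLpNorm (f i₁) p μ).toReal) := by
  have hLp := tendsto_inv_smul_sub_of_expansion (u := fun n => (ha n).toLp (a n))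
    (w := fun j => (hf j).toLp (f j)) h₁₀ hψ₀ hψ₁ hdom
    (hexp.mono fun n hn => ((ha n).norm_toLp_sub_sum_smul hf (ψ · n)).trans_le hn) hδ
  rw [← Lp.norm_toLp (f i₁) (hf i₁)]
  refine (continuous_norm.tendsto _ |>.comp hLp).congr' ?_
  filter_upwards [hψ₁] with n hn
  rw [Function.comp_apply, norm_smul, norm_inv, norm_of_nonneg hn.le, ← MemLp.toLp_sub,
    Lp.norm_toLp]
  rfl

end Expansion

theorem tendsto_div_ofReal_of_tendsto_inv_smul {α : Type*} {l : Filter α} {φ N : α → ℝ}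
    {a : α → ℂ} {z : ℂ} {L : ℝ} (hφ : ∀ᶠ n in l, φ n ≠ 0)
    (ha : Tendsto (fun n => (φ n)⁻¹ • a n) l (𝓝 z))
    (hN : Tendsto (fun n => (φ n)⁻¹ * N n) l (𝓝 L)) (hL : L ≠ 0) :
    Tendsto (fun n => a n / (N n : ℂ)) l (𝓝 (z / L)) := by
  refine (ha.div ((Complex.continuous_ofReal.tendsto L).comp hN)
    (Complex.ofReal_ne_zero.2 hL)).congr' ?_
  filter_upwards [hφ] with n hn
  simp only [Pi.div_apply, Function.comp_apply, Complex.real_smul, Complex.ofReal_mul,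
    Complex.ofReal_inv]
  rw [mul_div_mul_left _ _ (inv_ne_zero (Complex.ofReal_ne_zero.2 hn))]

theorem normalized_deviations_converge_ae_general {X : Type*} [MeasurableSpace X] (μ : Measure X)
    (k : ℕ) (hk : 1 ≤ k) (ρ r D ε : ℝ) (hD : 0 < D)
    (s : Fin (k + 1) → ℝ) (hanti : StrictAnti s) (hsr : r < s (Fin.last k))
    (c : Fin (k + 1) → ℝ) (hc : ∀ j, 0 < c j)
    (ψ : Fin (k + 1) → ℕ → ℝ) (hψ0 : ∀ n, ψ 0 n = 1)
    (hψ : ∀ j : Fin (k + 1), j ≠ 0 →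
      Tendsto (fun n : ℕ => ψ j n * Real.exp ((ρ - s j) * n)) atTop (𝓝 (c j)))
    (p : Fin (k + 1) → X → ℂ) (hp2 : ∀ j, MemLp (p j) 2 μ)
    (A : ℕ → X → ℂ) (hA2 : ∀ n, MemLp (A n) 2 μ)
    (hmean : ∀ n : ℕ, 1 ≤ n →
      eLpNorm (fun x => A n x - ∑ j, ψ j n * p j x) 2 μ ≤
        ENNReal.ofReal (D * n * Real.exp (-(ρ - r) * n)))
    (C : X → ℝ)
    (hpt : ∀ᵐ x ∂μ, ∀ n : ℕ, 1 ≤ n →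
      ‖A n x - ∑ j, ψ j n * p j x‖ ≤ C x * (n : ℝ) ^ ((3:ℝ)/2 + ε) * Real.exp (-(ρ - r) * n))
    (h1 : eLpNorm (p 1) 2 μ ≠ 0) :
    ∀ᵐ x ∂μ, Tendsto
      (fun n : ℕ => (A n x - p 0 x) / ((eLpNorm (fun y => A n y - p 0 y) 2 μ).toReal : ℂ))
      atTop (𝓝 (p 1 x / ((eLpNorm (p 1) 2 μ).toReal : ℂ))) := by
  have h₁₀ : (1 : Fin (k + 1)) ≠ 0 := by
    rw [Ne, Fin.ext_iff, Fin.val_one', Fin.val_zero, Nat.mod_eq_of_lt (by omega)]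
    omega
  have hrs₁ : r < s 1 := hsr.trans_le (hanti.antitone (Fin.le_last 1))
  have hψ₁ := hψ 1 h₁₀
  have hpos₁ : ∀ᶠ n in atTop, 0 < ψ 1 n :=
    eventually_pos_of_tendsto_mul (fun _ => exp_pos _) hψ₁ (hc 1)
  have hdom : ∀ j, j ≠ 0 → j ≠ 1 → Tendsto (fun n => ψ j n / ψ 1 n) atTop (𝓝 0) := by
    intro j hj₀ hj₁
    have hsj : s j < s 1 := hanti (lt_of_le_of_ne (Fin.one_le_of_ne_zero hj₀) hj₁.symm)
    exact tendsto_div_of_tendsto_mul (fun _ => (exp_pos _).ne')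
      (tendsto_mul_exp_of_lt (hψ j hj₀) (by linarith)) hψ₁ (hc 1).ne'
  have hdecay : ∀ K a : ℝ,
      Tendsto (fun n : ℕ => K * (n : ℝ) ^ a * exp (-(ρ - r) * n) / ψ 1 n) atTop (𝓝 0) :=
    fun K a => tendsto_div_of_tendsto_mul (fun _ => (exp_pos _).ne')
      (tendsto_rpow_mul_exp_neg_mul_mul_exp K a (by linarith)) hψ₁ (hc 1).ne'
  have hnorm : Tendsto (fun n => (ψ 1 n)⁻¹ * (eLpNorm (fun y => A n y - p 0 y) 2 μ).toReal)
      atTop (𝓝 (eLpNorm (p 1) 2 μ).toReal) := by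
    refine tendsto_inv_mul_eLpNorm_sub_of_expansion hp2 hA2 h₁₀ hψ0 hpos₁ hdom ?_ (hdecay D 1)
    filter_upwards [eventually_ge_atTop 1] with n hn
    simp only [rpow_one, Complex.real_smul]
    exact ENNReal.toReal_le_of_le_ofReal (by positivity) (hmean n hn)
  filter_upwards [hpt] with x hx
  have hpt_x : Tendsto (fun n => (ψ 1 n)⁻¹ • (A n x - p 0 x)) atTop (𝓝 (p 1 x)) := by
    refine tendsto_inv_smul_sub_of_expansion (u := (A · x)) (w := (p · x)) h₁₀ hψ0 hpos₁ hdom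
      ?_ (hdecay (C x) (3 / 2 + ε))
    filter_upwards [eventually_ge_atTop 1] with n hn
    simpa only [Complex.real_smul] using hx n hn
  exact tendsto_div_ofReal_of_tendsto_inv_smul (hpos₁.mono fun _ h => h.ne') hpt_x hnorm
    (ENNReal.toReal_pos h1 (hp2 1).2.ne).ne'

theorem normalized_deviations_converge_ae {X : Type*} [MeasurableSpace X] (μ : Measure X)
    [IsProbabilityMeasure μ]
    (k : ℕ) (hk : 1 ≤ k) (ρ r D ε : ℝ) (hr : 0 < r) (hD : 0 < D) (hε : 0 < ε)
    (s : Fin (k + 1) → ℝ) (hs0 : s 0 = ρ) (hanti : StrictAnti s) (hsr : r < s (Fin.last k))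
    (c : Fin (k + 1) → ℝ) (hc : ∀ j, 0 < c j)
    (ψ : Fin (k + 1) → ℕ → ℝ) (hψ0 : ∀ n, ψ 0 n = 1)
    (hψ : ∀ j : Fin (k + 1), j ≠ 0 →
      Tendsto (fun n : ℕ => ψ j n * Real.exp ((ρ - s j) * n)) atTop (𝓝 (c j)))
    (p : Fin (k + 1) → X → ℂ) (hp2 : ∀ j, MemLp (p j) 2 μ)
    (horth : ∀ i j, i ≠ j → ∫ x, p i x * (starRingEnd ℂ) (p j x) ∂μ = 0)
    (A : ℕ → X → ℂ) (hA2 : ∀ n, MemLp (A n) 2 μ)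
    (hmean : ∀ n : ℕ, 1 ≤ n →
      eLpNorm (fun x => A n x - ∑ j, ψ j n * p j x) 2 μ ≤
        ENNReal.ofReal (D * n * Real.exp (-(ρ - r) * n)))
    (C : X → ℝ)
    (hpt : ∀ᵐ x ∂μ, ∀ n : ℕ, 1 ≤ n →
      ‖A n x - ∑ j, ψ j n * p j x‖ ≤ C x * (n : ℝ) ^ ((3:ℝ)/2 + ε) * Real.exp (-(ρ - r) * n))
    (h1 : eLpNorm (p 1) 2 μ ≠ 0) :
    ∀ᵐ x ∂μ, Tendsto
      (fun n : ℕ => (A n x - p 0 x) / ((eLpNorm (fun y => A n y - p 0 y) 2 μ).toReal : ℂ))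
      atTop (𝓝 (p 1 x / ((eLpNorm (p 1) 2 μ).toReal : ℂ))) :=
  normalized_deviations_converge_ae_general μ k hk ρ r D ε hD s hanti hsr c hc ψ hψ0 hψ p hp2 A hA2
    hmean C hpt h1
end
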